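/- Binary discrimination of depolarizing channels with a pure unentangled input: Let d ≥ 2 and let φ be any rank-one orthogonal projection (pure state) on ℂ^d. For q ∈ [0,1] set τ_q = q·(1/d)·I_d + (1−q)·φ, a density matrix on ℂ^d. Then for all q0, q1 ∈ [0,1] and u ≥ 1, the Helstrom error probability of the two equiprobable states τ_{q0}^{⊗u} and τ_{q1}^{⊗u} equals f_u((1 − d^{−1})·q0, (1 − d^{−1})·q1). -/

import Mathlib

/-!
Diagonalize the rank-one projection as `φ = U · diag(e_j) · U*`. Then every `τ_q` is diagonal in
the same basis, and `τ_q^{⊗u} = V · diag(w_q^{⊗u}) · V*` with `V = U^{⊗u}`, where `w_q` takes the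
value `1 - r_q` at `j` and `q/d` elsewhere, and `r_q = (1 - 1/d) q`. For two unit-trace matrices
whose difference is `V · diag(g) · V*`, the best measurement projects onto the positive part
of `g`, so `P_H = 1/2 - ‖g‖₁/4`. The entry of `w_{q}^{⊗u}` at a multi-index with `m`
coordinates different from `j` is `(q/d)^m (1 - r_q)^(u-m)`. There are `C(u,m) (d-1)^m` such
multi-indices, and `(d-1) q/d = r_q`, which gives `f_u(r_{q0}, r_{q1})`.
-/

open Matrix BigOperators Finset ComplexOrder

noncomputable section

/-- A density matrix: positive semidefinite with unit trace. -/
def IsDensityMatrix {ι : Type*} [Fintype ι] (ρ : Matrix ι ι ℂ) : Prop :=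
  ρ.PosSemidef ∧ ρ.trace = 1

/-- The Helstrom minimum error probability for discriminating the states `ρ n`
with prior probabilities `p n`, optimized over all POVMs. -/
def helstrom {ι : Type*} [Fintype ι] [DecidableEq ι] {m : ℕ}
    (ρ : Fin m → Matrix ι ι ℂ) (p : Fin m → ℝ) : ℝ :=
  1 - sSup { x : ℝ | ∃ M : Fin m → Matrix ι ι ℂ,
      (∀ n, (M n).PosSemidef) ∧ (∑ n, M n) = 1 ∧
      x = ∑ n, p n * ((M n * ρ n).trace).re }

open Classical in
/-- The positive semidefinite square root (junk value `0` off the PSD cone). -/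
def psdSqrt {ι : Type*} [Fintype ι] [DecidableEq ι] (A : Matrix ι ι ℂ) : Matrix ι ι ℂ :=
  if h : A.PosSemidef then (h.1.eigenvectorUnitary : Matrix ι ι ℂ) *
    diagonal (fun i => ((Real.sqrt (h.1.eigenvalues i) : ℝ) : ℂ)) *
    star (h.1.eigenvectorUnitary : Matrix ι ι ℂ) else 0

/-- The trace norm `‖A‖₁ = tr √(Aᴴ A)`. -/
def traceNorm {ι : Type*} [Fintype ι] [DecidableEq ι] (A : Matrix ι ι ℂ) : ℝ :=
  ((psdSqrt (Aᴴ * A)).trace).re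

/-- The `u`-fold Kronecker (tensor) power of a square matrix. -/
def tensorPow {ι : Type*} (σ : Matrix ι ι ℂ) (u : ℕ) :
    Matrix (Fin u → ι) (Fin u → ι) ℂ :=
  fun i j => ∏ k, σ (i k) (j k)

/-- The binary error-probability function `f_u(q0,q1)`. -/
def fErr (u : ℕ) (q0 q1 : ℝ) : ℝ :=
  1/2 - (1/4) * ∑ k ∈ Finset.range (u+1),
    (u.choose k : ℝ) * |q0^k * (1-q0)^(u-k) - q1^k * (1-q1)^(u-k)|

theorem sum_fun_apply_card_filter {ι M : Type*} [Fintype ι] [AddCommMonoid M] (p : ι → Prop)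
    [DecidablePred p] (u : ℕ) (F : ℕ → M) :
    ∑ i : Fin u → ι, F #{k | p (i k)} =
      ∑ m ∈ range (u + 1), (u.choose m * #{j | p j} ^ m * #{j | ¬p j} ^ (u - m)) • F m := by
  classical
  have card_fiber (S : Finset (Fin u)) :
      #{i : Fin u → ι | ({k | p (i k)} : Finset (Fin u)) = S} =
        #{j | p j} ^ #S * #{j | ¬p j} ^ (u - #S) := by
    have : ({i : Fin u → ι | ({k | p (i k)} : Finset (Fin u)) = S} : Finset _) =
        Fintype.piFinset fun k => if k ∈ S then univ.filter p else univ.filter (¬p ·) := by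
      ext i
      simp only [mem_filter, mem_univ, true_and, Fintype.mem_piFinset, Finset.ext_iff]
      refine forall_congr' fun k => ?_
      split_ifs with hk <;> simp [hk]
    rw [this, Fintype.card_piFinset]
    simp only [apply_ite card, prod_ite, prod_const, filter_mem_eq_inter, univ_inter]
    rw [filter_notMem_eq_sdiff, card_univ_sdiff, Fintype.card_fin]
  calc ∑ i : Fin u → ι, F #{k | p (i k)}
      = ∑ S : Finset (Fin u), #{i : Fin u → ι | ({k | p (i k)} : Finset (Fin u)) = S} • F #S := by
        rw [← Finset.sum_fiberwise univ (fun i : Fin u → ι => ({k | p (i k)} : Finset (Fin u)))]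
        refine sum_congr rfl fun S _ => ?_
        rw [← sum_const]
        exact sum_congr rfl fun i hi => by rw [(mem_filter.mp hi).2]
    _ = ∑ S ∈ (univ : Finset (Fin u)).powerset,
          (#{j | p j} ^ #S * #{j | ¬p j} ^ (u - #S)) • F #S := by
        simp only [card_fiber, powerset_univ]
    _ = _ := by
        rw [sum_powerset_apply_card (fun m => (#{j | p j} ^ m * #{j | ¬p j} ^ (u - m)) • F m),
          card_univ, Fintype.card_fin]
        simp only [smul_smul, mul_assoc]

theorem sum_abs_sub_prod_ite_eq {ι : Type*} [Fintype ι] [DecidableEq ι] (j : ι) (u : ℕ)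
    (x₀ y₀ x₁ y₁ : ℝ) :
    ∑ i : Fin u → ι, |∏ k, (if i k = j then x₀ else y₀) - ∏ k, (if i k = j then x₁ else y₁)| =
      ∑ m ∈ range (u + 1), u.choose m *
        |((Fintype.card ι - 1) * y₀) ^ m * x₀ ^ (u - m) -
          ((Fintype.card ι - 1) * y₁) ^ m * x₁ ^ (u - m)| := by
  have prod_eq (i : Fin u → ι) (x y : ℝ) :
      ∏ k, (if i k = j then x else y) = y ^ #{k | i k ≠ j} * x ^ (u - #{k | i k ≠ j}) := by
    have : u - #{k | i k ≠ j} = #{k | i k = j} := by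
      have := card_filter_add_card_filter_not (s := univ) (fun k => i k = j)
      simp only [card_univ, Fintype.card_fin, ne_eq] at this ⊢
      omega
    rw [prod_ite, prod_const, prod_const, mul_comm, this]
  have card_ne : (#{i | i ≠ j} : ℝ) = Fintype.card ι - 1 := by
    rw [filter_ne', card_erase_of_mem (mem_univ j), card_univ,
      Nat.cast_sub (Fintype.card_pos_iff.mpr ⟨j⟩), Nat.cast_one]
  have card_nonneg : (0 : ℝ) ≤ Fintype.card ι - 1 := by rw [← card_ne]; positivity
  simp only [prod_eq]
  rw [sum_fun_apply_card_filter (· ≠ j) u fun m => |y₀ ^ m * x₀ ^ (u - m) - y₁ ^ m * x₁ ^ (u - m)|]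
  refine sum_congr rfl fun m _ => ?_
  have factor (c : ℝ) : (c * y₀) ^ m * x₀ ^ (u - m) - (c * y₁) ^ m * x₁ ^ (u - m) =
      c ^ m * (y₀ ^ m * x₀ ^ (u - m) - y₁ ^ m * x₁ ^ (u - m)) := by ring
  rw [factor, abs_mul, abs_of_nonneg (pow_nonneg card_nonneg m), nsmul_eq_mul]
  push_cast
  rw [card_ne]
  simp [mul_assoc, filter_eq']

theorem exists_eq_piSingle_of_sum_eq_one {ι : Type*} [Fintype ι] [DecidableEq ι] {f : ι → ℝ}
    (hf : ∀ i, f i = 0 ∨ f i = 1) (hsum : ∑ i, f i = 1) : ∃ j, f = Pi.single j 1 := by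
  obtain ⟨j, hj⟩ : ∃ j, f j = 1 := by
    by_contra! h
    simp [fun i => (hf i).resolve_right (h i)] at hsum
  refine ⟨j, funext fun i => ?_⟩
  rcases eq_or_ne i j with rfl | hij
  · simp [hj]
  · rw [← add_sum_erase _ _ (mem_univ j), hj, add_eq_left,
      sum_eq_zero_iff_of_nonneg fun k _ => (hf k).elim ge_of_eq (fun h => h ▸ zero_le_one)]
      at hsum
    simpa [hij] using hsum i (by simp [hij])

section TensorPow

variable {ι : Type*}

theorem tensorPow_mul [Fintype ι] (A B : Matrix ι ι ℂ) (u : ℕ) :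
    tensorPow (A * B) u = tensorPow A u * tensorPow B u := by
  ext i j
  simp only [tensorPow, mul_apply, prod_univ_sum, Fintype.piFinset_univ, prod_mul_distrib]

theorem tensorPow_conjTranspose (A : Matrix ι ι ℂ) (u : ℕ) :
    tensorPow Aᴴ u = (tensorPow A u)ᴴ := by
  ext i j
  simp [tensorPow, conjTranspose_apply, star_prod]

theorem tensorPow_diagonal [DecidableEq ι] (v : ι → ℂ) (u : ℕ) :
    tensorPow (diagonal v) u = diagonal fun i => ∏ k, v (i k) := by
  ext i j
  by_cases h : i = j
  · subst h; simp [tensorPow]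
  · obtain ⟨k, hk⟩ := Function.ne_iff.mp h
    rw [diagonal_apply_ne _ h]
    exact prod_eq_zero (mem_univ k) (diagonal_apply_ne _ hk)

theorem tensorPow_one [DecidableEq ι] (u : ℕ) :
    tensorPow (1 : Matrix ι ι ℂ) u = 1 := by
  simp [← diagonal_one, tensorPow_diagonal]

theorem trace_tensorPow [Fintype ι] (A : Matrix ι ι ℂ) (u : ℕ) :
    (tensorPow A u).trace = A.trace ^ u := by
  simp only [trace, Matrix.diag, tensorPow, sum_pow', Fintype.piFinset_univ]

theorem tensorPow_mem_unitaryGroup [Fintype ι] [DecidableEq ι] {U : Matrix ι ι ℂ}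
    (hU : U ∈ unitaryGroup ι ℂ) (u : ℕ) : tensorPow U u ∈ unitaryGroup (Fin u → ι) ℂ := by
  rw [mem_unitaryGroup_iff, star_eq_conjTranspose, ← tensorPow_conjTranspose, ← tensorPow_mul,
    ← star_eq_conjTranspose, Unitary.mul_star_self_of_mem hU, tensorPow_one]

theorem tensorPow_mul_diagonal_mul_star [Fintype ι] [DecidableEq ι]
    (U : Matrix ι ι ℂ) (v : ι → ℂ) (u : ℕ) :
    tensorPow (U * diagonal v * star U) u =
      tensorPow U u * diagonal (fun i => ∏ k, v (i k)) * star (tensorPow U u) := by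
  simp only [tensorPow_mul, star_eq_conjTranspose, tensorPow_conjTranspose, tensorPow_diagonal]

end TensorPow

namespace Matrix

variable {ι : Type*} [Fintype ι] [DecidableEq ι]

theorem re_trace_mul_mul_diagonal_mul_star (M V : Matrix ι ι ℂ) (g : ι → ℝ) :
    (M * (V * diagonal (fun i => (g i : ℂ)) * star V)).trace.re =
      ∑ i, ((star V * M * V) i i).re * g i := by
  rw [← mul_assoc, ← mul_assoc, trace_mul_cycle, ← mul_assoc]
  simp [trace, mul_diagonal, Complex.mul_re]

theorem success_pair_eq_of_sub_eq_mul_diagonal_mul_star {ρ₀ ρ₁ V M : Matrix ι ι ℂ}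
    {g : ι → ℝ} (hρ₁ : ρ₁.trace = 1)
    (hg : ρ₀ - ρ₁ = V * diagonal (fun i => (g i : ℂ)) * star V) :
    1/2 * (M * ρ₀).trace.re + 1/2 * ((1 - M) * ρ₁).trace.re =
      1/2 + (∑ i, ((star V * M * V) i i).re * g i) / 2 := by
  rw [← re_trace_mul_mul_diagonal_mul_star, ← hg, sub_mul, one_mul, mul_sub, trace_sub,
    trace_sub, hρ₁]
  simp only [Complex.sub_re, Complex.one_re]
  ring

theorem re_star_mul_mul_apply_mem_Icc {M₀ M₁ V : Matrix ι ι ℂ} (h₀ : M₀.PosSemidef)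
    (h₁ : M₁.PosSemidef) (hM : M₀ + M₁ = 1) (hV : V ∈ unitaryGroup ι ℂ) (i : ι) :
    ((star V * M₀ * V) i i).re ∈ Set.Icc 0 1 := by
  have nonneg₀ : 0 ≤ ((star V * M₀ * V) i i).re :=
    (Complex.nonneg_iff.mp <| (h₀.conjTranspose_mul_mul_same V).diag_nonneg).1
  have nonneg₁ : 0 ≤ ((star V * M₁ * V) i i).re :=
    (Complex.nonneg_iff.mp <| (h₁.conjTranspose_mul_mul_same V).diag_nonneg).1
  have hsum : star V * M₀ * V + star V * M₁ * V = 1 := by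
    rw [← add_mul, ← mul_add, hM, mul_one, Unitary.star_mul_self_of_mem hV]
  have := congrArg (fun A => (A i i).re) hsum
  simp only [add_apply, Complex.add_re, one_apply_eq, Complex.one_re] at this
  exact ⟨nonneg₀, by linarith⟩

theorem exists_unitary_eq_mul_diagonal_single_mul_star {φ : Matrix ι ι ℂ}
    (hherm : φᴴ = φ) (hproj : φ * φ = φ) (htr : φ.trace = 1) :
    ∃ U ∈ unitaryGroup ι ℂ, ∃ j, φ = U * diagonal (Pi.single j 1) * star U := by
  have hA : φ.IsHermitian := hherm
  have idem (i : ι) : hA.eigenvalues i = 0 ∨ hA.eigenvalues i = 1 := by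
    have hD : diagonal (RCLike.ofReal ∘ hA.eigenvalues) * diagonal (RCLike.ofReal ∘ hA.eigenvalues)
        = (diagonal (RCLike.ofReal ∘ hA.eigenvalues) : Matrix ι ι ℂ) := by
      rw [← hA.conjStarAlgAut_star_eigenvectorUnitary, ← map_mul, hproj]
    have := congrFun₂ hD i i
    simp only [diagonal_mul_diagonal, diagonal_apply_eq, Function.comp_apply] at this
    have : hA.eigenvalues i * (hA.eigenvalues i - 1) = 0 := by
      rw [mul_sub_one, sub_eq_zero]
      exact_mod_cast this
    exact (mul_eq_zero.mp this).imp id sub_eq_zero.mp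
  have hsum : ∑ i, hA.eigenvalues i = 1 := by
    simpa [htr] using (congrArg Complex.re hA.trace_eq_sum_eigenvalues).symm
  obtain ⟨j, hj⟩ := exists_eq_piSingle_of_sum_eq_one idem hsum
  refine ⟨_, hA.eigenvectorUnitary.2, j, ?_⟩
  conv_lhs => rw [hA.spectral_theorem, Unitary.conjStarAlgAut_apply, hj]
  congr 3
  ext i
  by_cases h : i = j <;> simp [h]

theorem depolarized_eq_mul_diagonal_mul_star {U : Matrix ι ι ℂ} (hU : U ∈ unitaryGroup ι ℂ)
    (j : ι) (n : ℕ) (q : ℝ) :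
    (q : ℂ) • ((1 / (n : ℂ)) • (1 : Matrix ι ι ℂ)) + ((1 - q : ℝ) : ℂ) •
        (U * diagonal (Pi.single j 1) * star U) =
      U * diagonal (fun i => ((if i = j then 1 - (1 - 1 / n) * q else q / n : ℝ) : ℂ)) *
        star U := by
  have : diagonal (fun i => ((if i = j then 1 - (1 - 1 / n) * q else q / n : ℝ) : ℂ)) =
      (q : ℂ) • ((1 / (n : ℂ)) • 1) + ((1 - q : ℝ) : ℂ) • diagonal (Pi.single j 1) := by
    ext a b
    by_cases hab : a = b
    · subst hab
      by_cases h : a = j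
      · subst h; simp; ring
      · simp [h]; ring
    · simp [hab]
  simp only [this, Matrix.mul_add, Matrix.add_mul, Matrix.mul_smul, Matrix.smul_mul,
    Matrix.mul_one, Unitary.mul_star_self_of_mem hU]

end Matrix

theorem helstrom_pair_of_sub_eq_mul_diagonal_mul_star {ι : Type*} [Fintype ι] [DecidableEq ι]
    {ρ₀ ρ₁ V : Matrix ι ι ℂ} {g : ι → ℝ} (hρ₀ : ρ₀.trace = 1) (hρ₁ : ρ₁.trace = 1)
    (hV : V ∈ unitaryGroup ι ℂ) (hg : ρ₀ - ρ₁ = V * diagonal (fun i => (g i : ℂ)) * star V) :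
    helstrom ![ρ₀, ρ₁] ![1/2, 1/2] = 1/2 - (∑ i, |g i|) / 4 := by
  have sum_g : ∑ i, g i = 0 := by
    have := congrArg (fun A => A.trace.re) hg
    simpa [trace_sub, hρ₀, hρ₁, trace_mul_cycle V, Unitary.star_mul_self_of_mem hV,
      trace_diagonal] using this.symm
  suffices IsGreatest {x : ℝ | ∃ M : Fin 2 → Matrix ι ι ℂ, (∀ n, (M n).PosSemidef) ∧
      ∑ n, M n = 1 ∧ x = ∑ n, ![1/2, 1/2] n * (M n * ![ρ₀, ρ₁] n).trace.re}
      (1/2 + (∑ i, |g i|) / 4) by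
    rw [helstrom, this.csSup_eq]; ring
  constructor
  · set s : ι → ℝ := fun i => if 0 < g i then 1 else 0
    have psd (t : ι → ℝ) (ht : ∀ i, 0 ≤ t i) :
        (V * diagonal (fun i => (t i : ℂ)) * star V).PosSemidef :=
      (PosSemidef.diagonal fun i => by simpa using ht i).mul_mul_conjTranspose_same V
    have hsum : V * diagonal (fun i => (s i : ℂ)) * star V +
        V * diagonal (fun i => ((1 - s i : ℝ) : ℂ)) * star V = 1 := by
      rw [← add_mul, ← mul_add, diagonal_add]
      simp [Unitary.mul_star_self_of_mem hV]
    refine ⟨![V * diagonal (fun i => (s i : ℂ)) * star V,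
      V * diagonal (fun i => ((1 - s i : ℝ) : ℂ)) * star V], ?_, by simpa using hsum, ?_⟩
    · intro n
      fin_cases n
      · exact psd _ fun i => by positivity
      · exact psd _ fun i => by simp only [s]; split_ifs <;> norm_num
    · simp only [Fin.sum_univ_two, cons_val_zero, cons_val_one]
      rw [eq_sub_of_add_eq' hsum, success_pair_eq_of_sub_eq_mul_diagonal_mul_star hρ₁ hg,
        ← mul_assoc, ← mul_assoc, Unitary.star_mul_self_of_mem hV, one_mul, mul_assoc,
        Unitary.star_mul_self_of_mem hV, mul_one]
      have (i : ι) : s i * g i = (g i + |g i|) / 2 := by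
        simp only [s]
        split_ifs with hpos
        · rw [abs_of_pos hpos]; ring
        · rw [abs_of_nonpos (not_lt.mp hpos)]; ring
      simp only [diagonal_apply_eq, Complex.ofReal_re, this, ← sum_div, sum_add_distrib, sum_g]
      ring
  · rintro x ⟨M, hM, hsum, rfl⟩
    rw [Fin.sum_univ_two] at hsum
    simp only [Fin.sum_univ_two, cons_val_zero, cons_val_one]
    rw [eq_sub_of_add_eq' hsum, success_pair_eq_of_sub_eq_mul_diagonal_mul_star hρ₁ hg]
    have (i : ι) : ((star V * M 0 * V) i i).re * g i ≤ (g i + |g i|) / 2 := by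
      obtain ⟨h0, h1⟩ := re_star_mul_mul_apply_mem_Icc (hM 0) (hM 1) hsum hV i
      rcases le_total 0 (g i) with hpos | hneg
      · rw [abs_of_nonneg hpos]; nlinarith
      · rw [abs_of_nonpos hneg]; nlinarith
    have := sum_le_sum fun i (_ : i ∈ univ) => this i
    rw [← sum_div, sum_add_distrib, sum_g] at this
    linarith

theorem helstrom_binary_depolarizing_unentangled_general (d : ℕ)
    (φ : Matrix (Fin d) (Fin d) ℂ)
    (hherm : φᴴ = φ) (hproj : φ * φ = φ) (htr : φ.trace = 1)
    (q0 q1 : ℝ)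
    (u : ℕ) :
    helstrom
      ![tensorPow ((q0:ℂ) • ((1/(d:ℂ)) • (1 : Matrix (Fin d) (Fin d) ℂ))
          + (((1-q0 : ℝ)):ℂ) • φ) u,
        tensorPow ((q1:ℂ) • ((1/(d:ℂ)) • (1 : Matrix (Fin d) (Fin d) ℂ))
          + (((1-q1 : ℝ)):ℂ) • φ) u] ![1/2, 1/2]
      = fErr u ((1 - 1/(d:ℝ)) * q0) ((1 - 1/(d:ℝ)) * q1) := by
  obtain ⟨U, hU, j, hφ⟩ := exists_unitary_eq_mul_diagonal_single_mul_star hherm hproj htr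
  have hd : d ≠ 0 := j.pos.ne'
  have htrace (q : ℝ) : (tensorPow ((q:ℂ) • ((1/(d:ℂ)) • (1 : Matrix (Fin d) (Fin d) ℂ)) +
      (((1-q : ℝ)):ℂ) • φ) u).trace = 1 := by
    rw [trace_tensorPow, trace_add, trace_smul, trace_smul, trace_smul, trace_one, htr]
    simp [hd]
  set w : ℝ → Fin d → ℝ := fun q i => if i = j then 1 - (1 - 1 / d) * q else q / d
  have hτ (q : ℝ) : tensorPow ((q:ℂ) • ((1/(d:ℂ)) • (1 : Matrix (Fin d) (Fin d) ℂ)) +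
      (((1-q : ℝ)):ℂ) • φ) u =
      tensorPow U u * diagonal (fun i => ((∏ k, w q (i k) : ℝ) : ℂ)) * star (tensorPow U u) := by
    rw [hφ, depolarized_eq_mul_diagonal_mul_star hU, tensorPow_mul_diagonal_mul_star]
    push_cast
    rfl
  rw [helstrom_pair_of_sub_eq_mul_diagonal_mul_star (htrace q0) (htrace q1)
    (tensorPow_mem_unitaryGroup hU u) (g := fun i => ∏ k, w q0 (i k) - ∏ k, w q1 (i k))
    (by rw [hτ, hτ, ← sub_mul, ← mul_sub, diagonal_sub]; push_cast; rfl),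
    sum_abs_sub_prod_ite_eq, fErr, Fintype.card_fin]
  have (q : ℝ) : ((d : ℝ) - 1) * (q / d) = (1 - 1 / d) * q := by
    field_simp
  simp only [this]
  ring

/-- Binary discrimination of depolarizing channels with a pure unentangled input. -/
theorem helstrom_binary_depolarizing_unentangled (d : ℕ) (hd : 2 ≤ d)
    (φ : Matrix (Fin d) (Fin d) ℂ)
    (hherm : φᴴ = φ) (hproj : φ * φ = φ) (htr : φ.trace = 1)
    (q0 q1 : ℝ) (h0 : q0 ∈ Set.Icc (0:ℝ) 1) (h1 : q1 ∈ Set.Icc (0:ℝ) 1)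
    (u : ℕ) (hu : 1 ≤ u) :
    helstrom
      ![tensorPow ((q0:ℂ) • ((1/(d:ℂ)) • (1 : Matrix (Fin d) (Fin d) ℂ))
          + (((1-q0 : ℝ)):ℂ) • φ) u,
        tensorPow ((q1:ℂ) • ((1/(d:ℂ)) • (1 : Matrix (Fin d) (Fin d) ℂ))
          + (((1-q1 : ℝ)):ℂ) • φ) u] ![1/2, 1/2]
      = fErr u ((1 - 1/(d:ℝ)) * q0) ((1 - 1/(d:ℝ)) * q1) :=
  helstrom_binary_depolarizing_unentangled_general d φ hherm hproj htr q0 q1 u
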